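/- (Graph distance can be solved via the generalized Bellman–Ford algorithm.) For all vertices u, v : V, the (min, +) Bellman–Ford iterates are entrywise antitone in t and converge to the graph distance, i.e., ⨅_{t : ℕ} (d_t u v) = ⨅_{k : ℕ} ⨅ over all walks p of length k from u to v of ∑_{i=0}^{k-1} w (p i) (p (i+1)) (the infimum over all walks of any length of the total edge length, which is ∞ when no walk exists). -/

import Mathlib

/-!
Let `D k u v` be the least weight of a walk from `u` to `v` with exactly `k` edges. Splitting off
the last edge gives `D (k + 1) u v = ⨅ x, D k u x + w x v`, and `D 0 u v = d_0 u v`. Since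
addition on `ℝ≥0∞` commutes with infima, induction on `t` shows that `d_t u v = ⨅ k ≤ t, D k u v`
is the least weight of a walk with at most `t` edges, an infimum over a growing range exhausting `ℕ`.
-/

open ENNReal

/-- The (min, +) generalized Bellman–Ford iterates for graph distance:
`d 0 u v = if u = v then 0 else ∞` and
`d (t+1) u v = min (⨅ x, d t u x + w x v) (d 0 u v)`. -/
noncomputable def minPlusBF {V : Type*} [Fintype V] [DecidableEq V]
    (w : Matrix V V ℝ≥0∞) : ℕ → V → V → ℝ≥0∞
  | 0 => fun u v => if u = v then 0 else ∞
  | t + 1 => fun u v =>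
      min (⨅ x : V, minPlusBF w t u x + w x v) (if u = v then 0 else ∞)

section

variable {V : Type*}

def walkWeight {R : Type*} [AddCommMonoid R] (w : Matrix V V R) {k : ℕ}
    (p : Fin (k + 1) → V) : R :=
  ∑ i : Fin k, w (p i.castSucc) (p i.succ)

theorem walkWeight_snoc {R : Type*} [AddCommMonoid R] (w : Matrix V V R) {k : ℕ}
    (p : Fin (k + 1) → V) (v : V) :
    walkWeight w (Fin.snoc p v : Fin (k + 2) → V) = walkWeight w p + w (p (Fin.last k)) v := by
  simp only [walkWeight, Fin.sum_univ_castSucc (n := k), Fin.snoc_castSucc, Fin.succ_last,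
    Fin.snoc_last, Fin.succ_castSucc]

noncomputable def minWalkWeight (w : Matrix V V ℝ≥0∞) (k : ℕ) (u v : V) : ℝ≥0∞ :=
  ⨅ p : {p : Fin (k + 1) → V // p 0 = u ∧ p (Fin.last k) = v}, walkWeight w p.1

theorem minWalkWeight_le_walkWeight (w : Matrix V V ℝ≥0∞) {k : ℕ} (p : Fin (k + 1) → V)
    {u v : V} (hu : p 0 = u) (hv : p (Fin.last k) = v) :
    minWalkWeight w k u v ≤ walkWeight w p :=
  iInf_le_of_le ⟨p, hu, hv⟩ le_rfl

theorem minWalkWeight_zero [DecidableEq V] (w : Matrix V V ℝ≥0∞) (u v : V) :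
    minWalkWeight w 0 u v = if u = v then 0 else ∞ := by
  split_ifs with h
  · subst h
    exact nonpos_iff_eq_zero.1 <|
      (minWalkWeight_le_walkWeight w (fun _ => u) rfl rfl).trans_eq (by simp [walkWeight])
  · exact iInf_eq_top.2 fun p => absurd (p.2.1.symm.trans p.2.2) h

theorem minWalkWeight_succ (w : Matrix V V ℝ≥0∞) (k : ℕ) (u v : V) :
    minWalkWeight w (k + 1) u v = ⨅ x, minWalkWeight w k u x + w x v := by
  refine le_antisymm (le_iInf fun x => ?_) (le_iInf fun p => ?_)
  · refine (le_iInf fun q => ?_).trans_eq ENNReal.iInf_add.symm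
    obtain ⟨q, hq0, rfl⟩ := q
    have hu : (Fin.snoc q v : Fin (k + 2) → V) 0 = u := by
      rw [← Fin.castSucc_zero, Fin.snoc_castSucc, hq0]
    exact (minWalkWeight_le_walkWeight w _ hu (Fin.snoc_last _ _)).trans_eq (walkWeight_snoc w q v)
  · obtain ⟨p, hu, rfl⟩ := p
    refine iInf_le_of_le (p (Fin.last k).castSucc) <|
      (add_le_add_left (minWalkWeight_le_walkWeight w (Fin.init p) hu rfl) _).trans_eq ?_
    exact (walkWeight_snoc w (Fin.init p) _).symm.trans (congrArg _ (Fin.snoc_init_self p))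

theorem minPlusBF_eq_iInf_le [Fintype V] [DecidableEq V] (w : Matrix V V ℝ≥0∞) (t : ℕ)
    (u v : V) : minPlusBF w t u v = ⨅ k ≤ t, minWalkWeight w k u v := by
  induction t generalizing v with
  | zero => simp [minPlusBF, minWalkWeight_zero]
  | succ t ih =>
    simp only [minPlusBF, ih, ENNReal.iInf_add]
    rw [Nat.iInf_le_succ', inf_comm, minWalkWeight_zero]
    simp only [minWalkWeight_succ]
    rw [iInf_comm]
    exact congrArg _ (iInf_congr fun k => iInf_comm)

end

theorem minPlusBF_antitone_and_iInf_eq_graph_distance {V : Type*} [Fintype V] [DecidableEq V]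
    (w : Matrix V V ℝ≥0∞) (u v : V) :
    Antitone (fun t : ℕ => minPlusBF w t u v) ∧
      (⨅ t : ℕ, minPlusBF w t u v) =
        ⨅ k : ℕ, ⨅ p : {p : Fin (k + 1) → V // p 0 = u ∧ p (Fin.last k) = v},
          ∑ i : Fin k, w (p.1 i.castSucc) (p.1 i.succ) := by
  simp only [minPlusBF_eq_iInf_le]
  exact ⟨fun s t hst => biInf_mono fun k hk => hk.trans hst, biInf_le_eq_iInf⟩
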